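/- arXiv:2401.17254 — 2 statements merged into one kernel-verified Lean document; each statement's English description precedes it below -/
import Mathlib

section
/- Let r₁,…,r_k be elements of {0,…,N}. (i) If r₁,…,r_k are pairwise distinct, then the probability that for every 1 ≤ i ≤ k−1 at least one of r_i, r_{i+1} does not belong to A equals a_k. (ii) If k ≥ 2, r₁,…,r_{k−1} are pairwise distinct and r_k = r_{k−1}, then the probability that for every 1 ≤ i ≤ k−1 at least one of r_i, r_{i+1} does not belong to A equals (1 − p)·a_{k−2}. -/
open MeasureTheory Filter

/-- The Bernoulli(p) measure on `Bool`: `true` has probability `p`. -/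
noncomputable def bern (p : ℝ) : Measure Bool :=
  ENNReal.ofReal p • Measure.dirac true + ENNReal.ofReal (1 - p) • Measure.dirac false

/-- The law of a random subset of `{0, …, N}` where each element is included
independently with probability `p`, encoded by indicator functions. -/
noncomputable def prodBern (p : ℝ) (N : ℕ) : Measure (Fin (N + 1) → Bool) :=
  Measure.pi fun _ => bern p

/-- `n` belongs to the sumset `A + A`, where `A ⊆ {0,…,N}` is encoded by `ω`. -/
def inSumset {N : ℕ} (ω : Fin (N + 1) → Bool) (n : ℕ) : Prop :=
  ∃ a b : Fin (N + 1), ω a = true ∧ ω b = true ∧ (a : ℕ) + (b : ℕ) = n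

/-- `Y`: the number of integers in `{0,…,N}` missing from `A + A`. -/
noncomputable def Ycount (N : ℕ) (ω : Fin (N + 1) → Bool) : ℕ :=
  {n : ℕ | n ≤ N ∧ ¬ inSumset ω n}.ncard

/-- `Z`: the number of integers in `{N+1,…,2N}` missing from `A + A`. -/
noncomputable def Zcount (N : ℕ) (ω : Fin (N + 1) → Bool) : ℕ :=
  {n : ℕ | N + 1 ≤ n ∧ n ≤ 2 * N ∧ ¬ inSumset ω n}.ncard

/-- `W`: the number of integers in `{0,…,2N}` missing from `A + A`. -/
noncomputable def Wcount (N : ℕ) (ω : Fin (N + 1) → Bool) : ℕ :=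
  {n : ℕ | n ≤ 2 * N ∧ ¬ inSumset ω n}.ncard

/-- `Ỹ`: the number of integers in `{0,…,⌊N/2⌋}` missing from `A + A`. -/
noncomputable def Ytilde (N : ℕ) (ω : Fin (N + 1) → Bool) : ℕ :=
  {n : ℕ | n ≤ N / 2 ∧ ¬ inSumset ω n}.ncard

/-- `Z̃`: the number of integers in `{⌊3N/2⌋+1,…,2N}` missing from `A + A`. -/
noncomputable def Ztilde (N : ℕ) (ω : Fin (N + 1) → Bool) : ℕ :=
  {n : ℕ | 3 * N / 2 + 1 ≤ n ∧ n ≤ 2 * N ∧ ¬ inSumset ω n}.ncard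

/-- A string of `k` bits has no two consecutive ones. -/
def noTwoOnes {k : ℕ} (x : Fin k → Bool) : Prop :=
  ∀ i : ℕ, ∀ hi : i + 1 < k, ¬(x ⟨i, Nat.lt_of_succ_lt hi⟩ = true ∧ x ⟨i + 1, hi⟩ = true)

/-- `a_k`: the probability that `k` i.i.d. Bernoulli(p) bits contain no two
consecutive 1's (with `a_0 = 1`). -/
noncomputable def aseq (p : ℝ) (k : ℕ) : ℝ :=
  ((Measure.pi fun _ : Fin k => bern p) {x | noTwoOnes x}).toReal

/-!
Only the bits of `A` at the vertices `r i` matter. For distinct vertices they are i.i.d.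
Bernoulli(p) (a product measure restricted to an injectively indexed family of coordinates is
again a product), which gives (i). In (ii) the last edge `{r_{k-1}, r_{k-1}}` forces
`r_{k-1} ∉ A`, and then the edge `{r_{k-2}, r_{k-1}}` is automatically satisfied, so the event
is `{r_{k-1} ∉ A}` intersected with the no-two-ones event for the independent bits at
`r_1, …, r_{k-2}`.
-/

lemma isProbabilityMeasure_bern {p : ℝ} (hp0 : 0 ≤ p) (hp1 : p ≤ 1) :
    IsProbabilityMeasure (bern p) := by
  constructor
  simp [bern, ← ENNReal.ofReal_add hp0 (sub_nonneg.2 hp1)]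

lemma bern_singleton_false (p : ℝ) : bern p {false} = ENNReal.ofReal (1 - p) := by
  simp [bern]

lemma MeasureTheory.Measure.pi_map_precomp_of_injective {ι κ : Type*} [Fintype ι] [Fintype κ]
    {X : ι → Type*} [∀ i, MeasurableSpace (X i)] (μ : ∀ i, Measure (X i))
    [∀ i, IsProbabilityMeasure (μ i)] {g : κ → ι} (hg : g.Injective) :
    (Measure.pi μ).map (fun ω j => ω (g j)) = Measure.pi fun j => μ (g j) := by
  have hind := (ProbabilityTheory.iIndepFun_pi (X := fun _ => id) (μ := μ)
    fun _ => aemeasurable_id).precomp hg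
  rw [hind.map_fun_eq_pi_map fun j => (measurable_pi_apply (g j)).aemeasurable]
  simp only [(measurePreserving_eval μ _).map_eq]

lemma measure_pi_last_mem_and_init_mem {α : Type*} [MeasurableSpace α] (μ : Measure α)
    [SigmaFinite μ] {m : ℕ} {s : Set α} {t : Set (Fin m → α)} (hs : MeasurableSet s)
    (ht : MeasurableSet t) :
    Measure.pi (fun _ : Fin (m + 1) => μ) {y | y (Fin.last m) ∈ s ∧ Fin.init y ∈ t}
      = μ s * Measure.pi (fun _ : Fin m => μ) t := by
  have hpres := measurePreserving_piFinSuccAbove (fun _ : Fin (m + 1) => μ) (Fin.last m)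
  have hset : {y : Fin (m + 1) → α | y (Fin.last m) ∈ s ∧ Fin.init y ∈ t}
      = MeasurableEquiv.piFinSuccAbove (fun _ => α) (Fin.last m) ⁻¹' s ×ˢ t := by
    ext y
    simp [MeasurableEquiv.piFinSuccAbove]
  rw [hset, hpres.measure_preimage (hs.prod ht).nullMeasurableSet, Measure.prod_prod]

lemma noTwoOnes_iff {k : ℕ} (x : Fin k → Bool) :
    noTwoOnes x ↔ ∀ i : ℕ, ∀ hi : i + 1 < k,
      x ⟨i, Nat.lt_of_succ_lt hi⟩ = false ∨ x ⟨i + 1, hi⟩ = false := by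
  simp only [noTwoOnes, not_and_or, Bool.not_eq_true]

lemma noTwoOnes_iff_init {m : ℕ} (x : Fin (m + 2) → Bool) :
    noTwoOnes x ↔ noTwoOnes (Fin.init x) ∧
      (x (Fin.last m).castSucc = false ∨ x (Fin.last (m + 1)) = false) := by
  simp only [noTwoOnes_iff, Fin.init]
  constructor
  · intro h
    exact ⟨fun i hi => h i (by omega), h m (by omega)⟩
  · rintro ⟨hinit, hlast⟩ i hi
    rcases Nat.lt_or_ge (i + 1) (m + 1) with hlt | hge
    · exact hinit i hlt
    · obtain rfl : i = m := by omega
      exact hlast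

lemma noTwoOnes_iff_init_of_last_eq_false {m : ℕ} {y : Fin (m + 1) → Bool}
    (hy : y (Fin.last m) = false) : noTwoOnes y ↔ noTwoOnes (Fin.init y) := by
  cases m with
  | zero => simp [noTwoOnes]
  | succ m => simp [noTwoOnes_iff_init y, hy]

lemma setOf_chain_eq_preimage {ι : Type*} {k : ℕ} (r : Fin k → ι) :
    {ω : ι → Bool | ∀ i : ℕ, ∀ hi : i + 1 < k,
        ω (r ⟨i, Nat.lt_of_succ_lt hi⟩) = false ∨ ω (r ⟨i + 1, hi⟩) = false}
      = (fun ω j => ω (r j)) ⁻¹' {x | noTwoOnes x} := by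
  ext ω
  simp only [Set.mem_ofPred_eq, Set.mem_preimage, noTwoOnes_iff]

lemma setOf_looped_chain_eq_preimage {ι : Type*} {m : ℕ} {r : Fin (m + 2) → ι}
    (hloop : r (Fin.last (m + 1)) = r (Fin.last m).castSucc) :
    {ω : ι → Bool | ∀ i : ℕ, ∀ hi : i + 1 < m + 2,
        ω (r ⟨i, Nat.lt_of_succ_lt hi⟩) = false ∨ ω (r ⟨i + 1, hi⟩) = false}
      = (fun ω j => ω (r (Fin.castSucc j))) ⁻¹'
          {y : Fin (m + 1) → Bool |
            y (Fin.last m) ∈ ({false} : Set Bool) ∧ Fin.init y ∈ {x | noTwoOnes x}} := by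
  rw [setOf_chain_eq_preimage]
  ext ω
  simp only [Set.mem_ofPred_eq, Set.mem_preimage, Set.mem_singleton_iff, noTwoOnes_iff_init,
    hloop, or_self]
  rw [and_comm]
  exact and_congr_right fun hlast =>
    noTwoOnes_iff_init_of_last_eq_false (y := fun j => ω (r j.castSucc)) hlast

/-- (i) A loopless chain `r₁,…,r_k` of distinct elements of `{0,…,N}` is
satisfied with probability `a_k`; (ii) a looped chain (`r_k = r_{k-1}`,
otherwise distinct) is satisfied with probability `(1-p)·a_{k-2}`. -/
theorem stmt5 (p : ℝ) (hp0 : 0 < p) (hp1 : p < 1) (N k : ℕ) (r : Fin k → Fin (N + 1)) :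
    (Function.Injective r →
      (prodBern p N {ω | ∀ i : ℕ, ∀ hi : i + 1 < k,
          ω (r ⟨i, Nat.lt_of_succ_lt hi⟩) = false ∨ ω (r ⟨i + 1, hi⟩) = false}).toReal
        = aseq p k) ∧
    (∀ hk : 2 ≤ k,
      (∀ i j : Fin k, (i : ℕ) < k - 1 → (j : ℕ) < k - 1 → r i = r j → i = j) →
      r ⟨k - 1, by omega⟩ = r ⟨k - 2, by omega⟩ →
      (prodBern p N {ω | ∀ i : ℕ, ∀ hi : i + 1 < k,
          ω (r ⟨i, Nat.lt_of_succ_lt hi⟩) = false ∨ ω (r ⟨i + 1, hi⟩) = false}).toReal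
        = (1 - p) * aseq p (k - 2)) := by
  have : IsProbabilityMeasure (bern p) := isProbabilityMeasure_bern hp0.le hp1.le
  refine ⟨fun hr => ?_, fun hk hinj hloop => ?_⟩
  · rw [prodBern, setOf_chain_eq_preimage,
      ← Measure.map_apply (by fun_prop) .of_discrete,
      Measure.pi_map_precomp_of_injective _ hr, aseq]
  · obtain ⟨m, rfl⟩ : ∃ m, k = m + 2 := ⟨k - 2, by omega⟩
    have hprefix : Function.Injective fun j : Fin (m + 1) => r j.castSucc := fun i j hij =>
      Fin.castSucc_injective _ (hinj _ _ (by rw [Fin.val_castSucc]; omega)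
        (by rw [Fin.val_castSucc]; omega) hij)
    rw [prodBern, setOf_looped_chain_eq_preimage hloop,
      ← Measure.map_apply (by fun_prop) .of_discrete,
      Measure.pi_map_precomp_of_injective _ hprefix,
      measure_pi_last_mem_and_init_mem _ .of_discrete .of_discrete,
      bern_singleton_false, ENNReal.toReal_mul, ENNReal.toReal_ofReal (by linarith), aseq]
    rfl
end

section
/- For every integer m with 0 ≤ m ≤ 2N, the absolute difference |P(W = m) − Σ_{y=0}^{m} P(Y = y)·P(Z = m − y)| is at most (8/p²)(1 − p²)^(N/4). -/
open MeasureTheory Filter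

/-!
Let `Ỹ` and `Z̃` count the sums missing from `A + A` in `[0, N/2]` and in `(3N/2, 2N]`. A sum
`n ≤ N/2` only involves elements `≤ N/2` of `A`, and a sum `n > 3N/2` only elements `> N/2`, so
`Ỹ` and `Z̃` are independent and the law of `Ỹ + Z̃` is exactly the convolution of their laws.

If `Y ≠ Ỹ` or `Z ≠ Z̃`, some `n ∈ (N/2, 3N/2]` is missing from `A + A`. Such an `n` has about
`N/4 + d/2` disjoint representations `a + (n - a)` with `a < n - a` in `[0, N]`, where `d` is its
distance to the nearer of `N/2` and `3N/2`; each lies in `A` independently with probability `p²`,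
and summing over `n` gives `P(Y ≠ Ỹ), P(Z ≠ Z̃) ≤ (2/p²)(1 - p²)^(N/4)`. Since `W = Y + Z`,
passing from `(Y, Z)` to `(Ỹ, Z̃)` both in `P(W = m)` and in the convolution costs at most
`P(Y ≠ Ỹ) + P(Z ≠ Z̃)`.
-/

open ProbabilityTheory

section Coupling

variable {Ω : Type*} [MeasurableSpace Ω] {μ : Measure Ω}

theorem abs_measureReal_sub_le_of_subset_union [IsFiniteMeasure μ] {s t e : Set Ω}
    (hst : s ⊆ t ∪ e) (hts : t ⊆ s ∪ e) : |μ.real s - μ.real t| ≤ μ.real e := by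
  have h₁ := (measureReal_mono (μ := μ) hst).trans (measureReal_union_le t e)
  have h₂ := (measureReal_mono (μ := μ) hts).trans (measureReal_union_le s e)
  rw [abs_sub_le_iff]
  constructor <;> linarith

theorem abs_measureReal_add_eq_sub_le [IsFiniteMeasure μ] {M : Type*} [Add M]
    (X X' Y Y' : Ω → M) (m : M) :
    |μ.real {ω | X ω + Y ω = m} - μ.real {ω | X' ω + Y' ω = m}| ≤
      μ.real {ω | X ω ≠ X' ω} + μ.real {ω | Y ω ≠ Y' ω} := by
  refine (abs_measureReal_sub_le_of_subset_union (e := {ω | X ω ≠ X' ω} ∪ {ω | Y ω ≠ Y' ω})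
    ?_ ?_).trans (measureReal_union_le _ _)
  all_goals
    intro ω hω
    by_cases hX : X ω = X' ω <;> by_cases hY : Y ω = Y' ω <;> simp_all

variable {α : Type*} [MeasurableSpace α] [MeasurableSingletonClass α]

theorem sum_measureReal_eq_mul_le [IsFiniteMeasure μ] {X X' : Ω → α}
    (hX : Measurable X) (hX' : Measurable X') (s : Finset α) {g : α → ℝ}
    (hg₀ : ∀ y, 0 ≤ g y) (hg₁ : ∀ y, g y ≤ 1) :
    ∑ y ∈ s, μ.real {ω | X ω = y} * g y ≤
      ∑ y ∈ s, μ.real {ω | X' ω = y} * g y + μ.real {ω | X ω ≠ X' ω} := by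
  have hsplit (y : α) : μ.real {ω | X ω = y} ≤
      μ.real {ω | X' ω = y} + μ.real {ω | X ω = y ∧ X' ω ≠ y} := by
    refine (measureReal_mono fun ω hω => ?_).trans (measureReal_union_le _ _)
    by_cases h : X' ω = y <;> simp_all
  have hdisagree : ∑ y ∈ s, μ.real {ω | X ω = y ∧ X' ω ≠ y} ≤ μ.real {ω | X ω ≠ X' ω} := by
    rw [← measureReal_biUnion_finset]
    · refine measureReal_mono (Set.iUnion₂_subset fun y _ ω hω => ?_)
      exact fun h => hω.2 (h.symm.trans hω.1)
    · intro y _ z _ hyz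
      exact Set.disjoint_left.2 fun ω h₁ h₂ => hyz (h₁.1.symm.trans h₂.1)
    · intro y _
      exact (hX (measurableSet_singleton y)).inter (hX' (measurableSet_singleton y)).compl
  calc ∑ y ∈ s, μ.real {ω | X ω = y} * g y
      ≤ ∑ y ∈ s, (μ.real {ω | X' ω = y} * g y + μ.real {ω | X ω = y ∧ X' ω ≠ y}) := by
        refine Finset.sum_le_sum fun y _ => ?_
        nlinarith [hsplit y, hg₀ y, hg₁ y, measureReal_nonneg (μ := μ) (s := {ω | X' ω = y}),
          measureReal_nonneg (μ := μ) (s := {ω | X ω = y ∧ X' ω ≠ y})]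
    _ ≤ _ := by rw [Finset.sum_add_distrib]; linarith

theorem abs_sum_measureReal_eq_mul_sub_le [IsFiniteMeasure μ] {X X' : Ω → α}
    (hX : Measurable X) (hX' : Measurable X') (s : Finset α) {g : α → ℝ}
    (hg₀ : ∀ y, 0 ≤ g y) (hg₁ : ∀ y, g y ≤ 1) :
    |∑ y ∈ s, μ.real {ω | X ω = y} * g y - ∑ y ∈ s, μ.real {ω | X' ω = y} * g y| ≤
      μ.real {ω | X ω ≠ X' ω} := by
  have h₁ := sum_measureReal_eq_mul_le (μ := μ) hX hX' s hg₀ hg₁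
  have h₂ := sum_measureReal_eq_mul_le (μ := μ) hX' hX s hg₀ hg₁
  simp only [ne_comm (a := X' _)] at h₂
  rw [abs_sub_le_iff]
  constructor <;> linarith

end Coupling

section Convolution

variable {Ω : Type*} [MeasurableSpace Ω] {μ : Measure Ω}

def probConv (μ : Measure Ω) (X Y : Ω → ℕ) (m : ℕ) : ℝ :=
  ∑ y ∈ Finset.range (m + 1), μ.real {ω | X ω = y} * μ.real {ω | Y ω = m - y}

theorem abs_probConv_sub_le [IsProbabilityMeasure μ] {X X' Y Y' : Ω → ℕ}
    (hX : Measurable X) (hX' : Measurable X') (hY : Measurable Y) (hY' : Measurable Y')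
    (m : ℕ) :
    |probConv μ X Y m - probConv μ X' Y' m| ≤
      μ.real {ω | X ω ≠ X' ω} + μ.real {ω | Y ω ≠ Y' ω} := by
  have reflect (V Z : Ω → ℕ) : probConv μ V Z m =
      ∑ z ∈ Finset.range (m + 1), μ.real {ω | Z ω = z} * μ.real {ω | V ω = m - z} := by
    rw [probConv, ← Finset.sum_range_reflect]
    refine Finset.sum_congr rfl fun z hz => ?_
    rw [Finset.mem_range] at hz
    rw [mul_comm, show m + 1 - 1 - z = m - z by omega, show m - (m - z) = z by omega]
  have hX_diff := abs_sum_measureReal_eq_mul_sub_le (μ := μ) hX hX' (Finset.range (m + 1))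
    (g := fun y => μ.real {ω | Y ω = m - y}) (fun _ => measureReal_nonneg)
    (fun _ => measureReal_le_one)
  have hY_diff := abs_sum_measureReal_eq_mul_sub_le (μ := μ) hY hY' (Finset.range (m + 1))
    (g := fun z => μ.real {ω | X' ω = m - z}) (fun _ => measureReal_nonneg)
    (fun _ => measureReal_le_one)
  rw [← reflect X' Y, ← reflect X' Y'] at hY_diff
  exact (abs_sub_le _ (probConv μ X' Y m) _).trans (add_le_add hX_diff hY_diff)

theorem ProbabilityTheory.IndepFun.measureReal_add_eq [IsProbabilityMeasure μ] {X Y : Ω → ℕ}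
    (hX : Measurable X) (hY : Measurable Y) (hXY : IndepFun X Y μ) (m : ℕ) :
    μ.real {ω | X ω + Y ω = m} = probConv μ X Y m := by
  have hunion : {ω | X ω + Y ω = m} =
      ⋃ y ∈ Finset.range (m + 1), {ω | X ω = y} ∩ {ω | Y ω = m - y} := by
    ext ω
    simp only [Set.mem_ofPred_eq, Set.mem_iUnion, Set.mem_inter_iff, Finset.mem_range]
    constructor
    · intro h
      refine ⟨X ω, ?_, rfl, ?_⟩ <;> omega
    · rintro ⟨y, hy, rfl, h⟩
      omega
  rw [hunion, measureReal_biUnion_finset]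
  · refine Finset.sum_congr rfl fun y _ => ?_
    simp only [measureReal_def, ← ENNReal.toReal_mul]
    exact congrArg ENNReal.toReal (hXY.measure_inter_preimage_eq_mul _ _
      (measurableSet_singleton y) (measurableSet_singleton (m - y)))
  · intro y _ z _ hyz
    exact Set.disjoint_left.2 fun ω h₁ h₂ => hyz (h₁.1.symm.trans h₂.1)
  · intro y _
    exact (hX (measurableSet_singleton y)).inter (hY (measurableSet_singleton _))

end Convolution

section ProductMeasure

variable {ι : Type*} [Fintype ι] {Ω : ι → Type*} [∀ i, MeasurableSpace (Ω i)]
  [∀ i, MeasurableSingletonClass (Ω i)] [∀ i, Countable (Ω i)]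
  (μ : ∀ i, Measure (Ω i)) [∀ i, IsProbabilityMeasure (μ i)]

theorem measure_pi_inter_eq_mul_of_dependsOn {s t : Finset ι} (hst : Disjoint s t)
    {A B : Set (∀ i, Ω i)} (hA : DependsOn (· ∈ A) s) (hB : DependsOn (· ∈ B) t) :
    Measure.pi μ (A ∩ B) = Measure.pi μ A * Measure.pi μ B := by
  have hindep : IndepFun (fun ω (i : s) => ω i) (fun ω (i : t) => ω i) (Measure.pi μ) :=
    (iIndepFun_pi (X := fun _ x => x) fun _ => aemeasurable_id).indepFun_finset s t hst
      fun i => measurable_pi_apply i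
  have saturated {u : Finset ι} {C : Set (∀ i, Ω i)} (hC : DependsOn (· ∈ C) u) :
      (fun ω (i : u) => ω i) ⁻¹' ((fun ω (i : u) => ω i) '' C) = C := by
    refine Set.Subset.antisymm (fun ω ⟨ω', hω', heq⟩ => ?_) (Set.subset_preimage_image _ _)
    exact (hC fun i hi => congrFun heq ⟨i, hi⟩).mp hω'
  have := hindep.measure_inter_preimage_eq_mul ((fun ω (i : s) => ω i) '' A)
    ((fun ω (i : t) => ω i) '' B) .of_discrete .of_discrete
  rwa [saturated hA, saturated hB] at this

theorem indepFun_pi_of_dependsOn {s t : Finset ι} (hst : Disjoint s t) {β γ : Type*}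
    [MeasurableSpace β] [MeasurableSpace γ] {X : (∀ i, Ω i) → β} {Y : (∀ i, Ω i) → γ}
    (hX : DependsOn X s) (hY : DependsOn Y t) : IndepFun X Y (Measure.pi μ) :=
  indepFun_iff_measure_inter_preimage_eq_mul.2 fun _ _ _ _ =>
    measure_pi_inter_eq_mul_of_dependsOn μ hst
      (fun _ _ h => by simp only [Set.mem_preimage, hX h])
      (fun _ _ h => by simp only [Set.mem_preimage, hY h])

end ProductMeasure

section Bernoulli

variable {p : ℝ}

theorem isProbabilityMeasure_bern_s6 (hp₀ : 0 ≤ p) (hp₁ : p ≤ 1) :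
    IsProbabilityMeasure (bern p) := by
  constructor
  simp only [bern, Measure.add_apply, Measure.smul_apply, measure_univ, smul_eq_mul, mul_one]
  rw [← ENNReal.ofReal_add hp₀ (by linarith), add_sub_cancel, ENNReal.ofReal_one]

theorem isProbabilityMeasure_prodBern (hp₀ : 0 ≤ p) (hp₁ : p ≤ 1) (N : ℕ) :
    IsProbabilityMeasure (prodBern p N) :=
  have := isProbabilityMeasure_bern_s6 hp₀ hp₁
  Measure.pi.instIsProbabilityMeasure _

variable {ι : Type*} [Fintype ι]

theorem measureReal_pi_bern_eval_eq_true (hp₀ : 0 ≤ p) (hp₁ : p ≤ 1) (i : ι) :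
    (Measure.pi fun _ : ι => bern p).real {ω | ω i = true} = p := by
  have := isProbabilityMeasure_bern_s6 hp₀ hp₁
  have heval := (measurePreserving_eval (fun _ : ι => bern p) i).measure_preimage
    (s := {true}) (MeasurableSet.of_discrete).nullMeasurableSet
  change ((Measure.pi fun _ : ι => bern p) (Function.eval i ⁻¹' {true})).toReal = p
  rw [heval]
  simp [bern, hp₀]

theorem measureReal_pi_bern_not_both (hp₀ : 0 ≤ p) (hp₁ : p ≤ 1) {i j : ι} (hij : i ≠ j) :
    (Measure.pi fun _ : ι => bern p).real {ω | ¬(ω i = true ∧ ω j = true)} = 1 - p ^ 2 := by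
  have := isProbabilityMeasure_bern_s6 hp₀ hp₁
  have hboth := measure_pi_inter_eq_mul_of_dependsOn (fun _ : ι => bern p)
    (Finset.disjoint_singleton.2 hij) (A := {ω | ω i = true}) (B := {ω | ω j = true})
    (fun x y h => by simp [h i (by simp)]) (fun x y h => by simp [h j (by simp)])
  rw [← Set.compl_ofPred, probReal_compl_eq_one_sub .of_discrete, Set.ofPred_and, measureReal_def,
    hboth, ENNReal.toReal_mul, ← measureReal_def, ← measureReal_def,
    measureReal_pi_bern_eval_eq_true hp₀ hp₁, measureReal_pi_bern_eval_eq_true hp₀ hp₁, sq]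

theorem measureReal_pi_bern_forall_not_both (hp₀ : 0 ≤ p) (hp₁ : p ≤ 1) {κ : Type*}
    (I : Finset κ) {u v : κ → ι} (hu : Set.InjOn u I) (hv : Set.InjOn v I)
    (huv : ∀ a ∈ I, ∀ b ∈ I, u a ≠ v b) :
    (Measure.pi fun _ : ι => bern p).real {ω | ∀ a ∈ I, ¬(ω (u a) = true ∧ ω (v a) = true)} =
      (1 - p ^ 2) ^ I.card := by
  classical
  have := isProbabilityMeasure_bern_s6 hp₀ hp₁
  induction I using Finset.induction_on with
  | empty => simp
  | insert a I ha ih =>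
    have hsplit : {ω : ι → Bool | ∀ b ∈ insert a I, ¬(ω (u b) = true ∧ ω (v b) = true)} =
        {ω | ¬(ω (u a) = true ∧ ω (v a) = true)} ∩
          {ω | ∀ b ∈ I, ¬(ω (u b) = true ∧ ω (v b) = true)} := by
      ext ω
      simp
    have hdisj : Disjoint ({u a, v a} : Finset ι) (I.image u ∪ I.image v) := by
      simp only [Finset.disjoint_insert_left, Finset.disjoint_singleton_left, Finset.mem_union,
        Finset.mem_image, not_or, not_exists, not_and]
      have hne : ∀ x ∈ I, x ≠ a := fun x hx hxa => ha (hxa ▸ hx)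
      exact ⟨⟨fun x hx h => hne x hx (hu (by simp [hx]) (by simp) h),
        fun x hx h => huv a (by simp) x (by simp [hx]) h.symm⟩,
        fun x hx h => huv x (by simp [hx]) a (by simp) h,
        fun x hx h => hne x hx (hv (by simp [hx]) (by simp) h)⟩
    rw [hsplit, measureReal_def, measure_pi_inter_eq_mul_of_dependsOn _ hdisj, ENNReal.toReal_mul,
      ← measureReal_def, ← measureReal_def,
      measureReal_pi_bern_not_both hp₀ hp₁ (huv a (by simp) a (by simp)),
      ih (hu.mono (by simp)) (hv.mono (by simp))
        fun b hb c hc => huv b (by simp [hb]) c (by simp [hc]),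
      Finset.card_insert_of_notMem ha, pow_succ' (1 - p ^ 2)]
    · intro x y h
      simp [h (u a) (by simp), h (v a) (by simp)]
    · intro x y h
      have hu' : ∀ b ∈ I, x (u b) = y (u b) := fun b hb =>
        h _ (Finset.mem_union_left _ (Finset.mem_image_of_mem u hb))
      have hv' : ∀ b ∈ I, x (v b) = y (v b) := fun b hb =>
        h _ (Finset.mem_union_right _ (Finset.mem_image_of_mem v hb))
      simp only [Set.mem_ofPred_eq]
      exact propext (forall₂_congr fun b hb => by rw [hu' b hb, hv' b hb])

end Bernoulli

section Sumset

variable {N : ℕ}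

theorem inSumset_congr {ω ω' : Fin (N + 1) → Bool} {n : ℕ}
    (h : ∀ i : Fin (N + 1), (i : ℕ) ≤ n → n ≤ i + N → ω i = ω' i) :
    inSumset ω n ↔ inSumset ω' n := by
  have key {ω ω' : Fin (N + 1) → Bool}
      (h : ∀ i : Fin (N + 1), (i : ℕ) ≤ n → n ≤ i + N → ω i = ω' i) :
      inSumset ω n → inSumset ω' n := by
    rintro ⟨a, b, ha, hb, rfl⟩
    have := a.isLt
    have := b.isLt
    exact ⟨a, b, h a (by omega) (by omega) ▸ ha, h b (by omega) (by omega) ▸ hb, rfl⟩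
  exact ⟨key h, key fun i hi hi' => (h i hi hi').symm⟩

theorem Wcount_eq_Ycount_add_Zcount (ω : Fin (N + 1) → Bool) :
    Wcount N ω = Ycount N ω + Zcount N ω := by
  have hsplit : {n | n ≤ 2 * N ∧ ¬inSumset ω n} =
      {n | n ≤ N ∧ ¬inSumset ω n} ∪ {n | N + 1 ≤ n ∧ n ≤ 2 * N ∧ ¬inSumset ω n} := by
    ext n
    simp only [Set.mem_ofPred_eq, Set.mem_union]
    constructor
    · rintro ⟨h₁, h₂⟩
      by_cases hn : n ≤ N
      exacts [Or.inl ⟨hn, h₂⟩, Or.inr ⟨by omega, h₁, h₂⟩]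
    · rintro (⟨h₁, h₂⟩ | ⟨-, h₁, h₂⟩)
      exacts [⟨by omega, h₂⟩, ⟨h₁, h₂⟩]
  rw [Wcount, hsplit, Set.ncard_union_eq
    (Set.disjoint_left.2 fun n h₁ h₂ => by simp only [Set.mem_ofPred_eq] at h₁ h₂; omega)
    ((Set.finite_Iic N).subset fun n hn => hn.1)
    ((Set.finite_Iic (2 * N)).subset fun n hn => hn.2.1)]
  rfl

theorem dependsOn_Ytilde :
    DependsOn (Ytilde N) ↑({i | (i : ℕ) ≤ N / 2} : Finset (Fin (N + 1))) := by
  intro ω ω' h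
  simp only [Ytilde]
  congr 1
  ext n
  simp only [Set.mem_ofPred_eq, and_congr_right_iff, not_iff_not]
  exact fun hn => inSumset_congr fun i hi _ => h i (by simp; omega)

theorem dependsOn_Ztilde :
    DependsOn (Ztilde N) ↑({i | N / 2 < (i : ℕ)} : Finset (Fin (N + 1))) := by
  intro ω ω' h
  simp only [Ztilde]
  congr 1
  ext n
  simp only [Set.mem_ofPred_eq, and_congr_right_iff, not_iff_not]
  exact fun hn _ => inSumset_congr fun i _ hi => h i (by simp; omega)

theorem Ycount_eq_Ytilde_of_forall {ω : Fin (N + 1) → Bool}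
    (h : ∀ n, N / 2 < n → n ≤ N → inSumset ω n) : Ycount N ω = Ytilde N ω := by
  simp only [Ycount, Ytilde]
  congr 1
  ext n
  simp only [Set.mem_ofPred_eq]
  constructor
  · rintro ⟨hn, hmiss⟩
    exact ⟨by_contra fun hlt => hmiss (h n (by omega) hn), hmiss⟩
  · rintro ⟨hn, hmiss⟩
    exact ⟨by omega, hmiss⟩

theorem Zcount_eq_Ztilde_of_forall {ω : Fin (N + 1) → Bool}
    (h : ∀ n, N < n → n ≤ N + N / 2 → inSumset ω n) : Zcount N ω = Ztilde N ω := by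
  simp only [Zcount, Ztilde]
  congr 1
  ext n
  simp only [Set.mem_ofPred_eq]
  constructor
  · rintro ⟨hn, hn', hmiss⟩
    exact ⟨by_contra fun hlt => hmiss (h n (by omega) (by omega)), hn', hmiss⟩
  · rintro ⟨hn, hn', hmiss⟩
    exact ⟨by omega, hn', hmiss⟩

end Sumset

section GeometricSum

theorem sum_range_pow_div_two_le {q : ℝ} (hq₀ : 0 ≤ q) (hq₁ : q < 1) (J : ℕ) :
    ∑ j ∈ Finset.range J, q ^ (j / 2) ≤ 2 / (1 - q) := by
  have hpair (K : ℕ) : ∑ j ∈ Finset.range (2 * K), q ^ (j / 2) =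
      2 * ∑ k ∈ Finset.range K, q ^ k := by
    induction K with
    | zero => simp
    | succ K ih =>
      rw [show 2 * (K + 1) = 2 * K + 1 + 1 by ring, Finset.sum_range_succ, Finset.sum_range_succ,
        ih, Finset.sum_range_succ, show (2 * K + 1) / 2 = K by omega,
        show 2 * K / 2 = K by omega]
      ring
  have hgeom : ∑ k ∈ Finset.range J, q ^ k ≤ 1 / (1 - q) := by
    have := geom_sum_Ico_le_of_lt_one (m := 0) (n := J) hq₀ hq₁
    rwa [← Finset.range_eq_Ico, pow_zero] at this
  calc ∑ j ∈ Finset.range J, q ^ (j / 2)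
      ≤ ∑ j ∈ Finset.range (2 * J), q ^ (j / 2) :=
        Finset.sum_le_sum_of_subset_of_nonneg (Finset.range_subset_range.2 (by omega))
          fun _ _ _ => pow_nonneg hq₀ _
    _ ≤ 2 / (1 - q) := by rw [hpair]; linarith [show 2 * (1 / (1 - q)) = 2 / (1 - q) by ring]

theorem sum_range_pow_le_of_le {q : ℝ} (hq₀ : 0 ≤ q) (hq₁ : q < 1) {J K : ℕ} {c : ℕ → ℕ}
    (hc : ∀ j < J, K + j / 2 ≤ c j) :
    ∑ j ∈ Finset.range J, q ^ c j ≤ 2 / (1 - q) * q ^ K :=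
  calc ∑ j ∈ Finset.range J, q ^ c j ≤ ∑ j ∈ Finset.range J, q ^ K * q ^ (j / 2) :=
        Finset.sum_le_sum fun j hj => by
          rw [← pow_add]
          exact pow_le_pow_of_le_one hq₀ hq₁.le (hc j (Finset.mem_range.1 hj))
    _ ≤ 2 / (1 - q) * q ^ K := by
        rw [← Finset.mul_sum, mul_comm]
        exact mul_le_mul_of_nonneg_right (sum_range_pow_div_two_le hq₀ hq₁ J) (pow_nonneg hq₀ _)

end GeometricSum

section MissingSums

variable {p : ℝ} {N : ℕ}

-- `(n + 1) / 2 - (n - N)` counts the pairs `{a, n - a}` with `a < n - a` inside `[0, N]`.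
theorem measureReal_not_inSumset_le (hp₀ : 0 ≤ p) (hp₁ : p ≤ 1) (n : ℕ) :
    (prodBern p N).real {ω | ¬inSumset ω n} ≤ (1 - p ^ 2) ^ ((n + 1) / 2 - (n - N)) := by
  have := isProbabilityMeasure_prodBern hp₀ hp₁ N
  set I := Finset.Ico (n - N) ((n + 1) / 2)
  have hcast {a : ℕ} (ha : a ≤ N) : (Fin.ofNat (N + 1) a : ℕ) = a := by
    rw [Fin.val_ofNat]
    exact Nat.mod_eq_of_lt (by omega)
  have hI {a : ℕ} (ha : a ∈ I) : n - N ≤ a ∧ 2 * a < n := by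
    rw [Finset.mem_Ico] at ha
    omega
  calc (prodBern p N).real {ω | ¬inSumset ω n}
      ≤ (prodBern p N).real {ω | ∀ a ∈ I,
          ¬(ω (Fin.ofNat (N + 1) a) = true ∧ ω (Fin.ofNat (N + 1) (n - a)) = true)} := by
        refine measureReal_mono fun ω hω a ha hboth => hω ⟨_, _, hboth.1, hboth.2, ?_⟩
        have := hI ha
        rw [hcast (by omega), hcast (by omega)]
        omega
    _ = (1 - p ^ 2) ^ ((n + 1) / 2 - (n - N)) := by
        rw [prodBern, measureReal_pi_bern_forall_not_both hp₀ hp₁, Nat.card_Ico]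
        all_goals
          intro a ha b hb hab
          have := hI ha
          have := hI hb
          rw [Fin.ext_iff, hcast (by omega), hcast (by omega)] at hab
          omega

theorem measureReal_exists_not_inSumset_le (hp₀ : 0 < p) (hp₁ : p < 1) {J : ℕ} {f : ℕ → ℕ}
    (hf : ∀ j < J, (N + 3) / 4 + j / 2 ≤ (f j + 1) / 2 - (f j - N)) :
    (prodBern p N).real {ω | ∃ j < J, ¬inSumset ω (f j)} ≤
      2 / p ^ 2 * (1 - p ^ 2) ^ ((N : ℝ) / 4) := by
  have := isProbabilityMeasure_prodBern hp₀.le hp₁.le N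
  set q := 1 - p ^ 2
  have hq₀ : 0 < q := by nlinarith
  have hq₁ : q < 1 := by nlinarith
  calc (prodBern p N).real {ω | ∃ j < J, ¬inSumset ω (f j)}
      ≤ ∑ j ∈ Finset.range J, (prodBern p N).real {ω | ¬inSumset ω (f j)} := by
        refine (measureReal_mono (fun ω hω => ?_) (measure_ne_top _ _)).trans
          (measureReal_biUnion_finset_le _ _)
        obtain ⟨j, hj, hmiss⟩ := hω
        exact Set.mem_biUnion (Finset.mem_range.2 hj) hmiss
    _ ≤ ∑ j ∈ Finset.range J, q ^ ((f j + 1) / 2 - (f j - N)) :=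
        Finset.sum_le_sum fun j _ => measureReal_not_inSumset_le hp₀.le hp₁.le (f j)
    _ ≤ 2 / (1 - q) * q ^ ((N + 3) / 4) := sum_range_pow_le_of_le hq₀.le hq₁ hf
    _ ≤ 2 / p ^ 2 * q ^ ((N : ℝ) / 4) := by
        have hN : (N : ℝ) ≤ 4 * ((N + 3) / 4 : ℕ) := by exact_mod_cast (by omega)
        have hpow : q ^ ((N + 3) / 4) ≤ q ^ ((N : ℝ) / 4) := by
          rw [← Real.rpow_natCast q ((N + 3) / 4)]
          exact Real.rpow_le_rpow_of_exponent_ge hq₀ hq₁.le (by linarith)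
        rw [show 1 - q = p ^ 2 by ring]
        exact mul_le_mul_of_nonneg_left hpow (by positivity)

end MissingSums

section Decoupling

variable {p : ℝ} {N : ℕ}

theorem measureReal_Ycount_ne_Ytilde_le (hp₀ : 0 < p) (hp₁ : p < 1) :
    (prodBern p N).real {ω | Ycount N ω ≠ Ytilde N ω} ≤
      2 / p ^ 2 * (1 - p ^ 2) ^ ((N : ℝ) / 4) := by
  have := isProbabilityMeasure_prodBern hp₀.le hp₁.le N
  refine (measureReal_mono (fun ω hω => ?_) (measure_ne_top _ _)).trans
    (measureReal_exists_not_inSumset_le hp₀ hp₁ (J := N - N / 2) (f := fun j => N / 2 + 1 + j)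
      fun j hj => by omega)
  by_contra h
  refine hω (Ycount_eq_Ytilde_of_forall fun n hn₁ hn₂ =>
    by_contra fun hmiss => h ⟨n - (N / 2 + 1), by omega, ?_⟩)
  rwa [show N / 2 + 1 + (n - (N / 2 + 1)) = n by omega]

theorem measureReal_Zcount_ne_Ztilde_le (hp₀ : 0 < p) (hp₁ : p < 1) :
    (prodBern p N).real {ω | Zcount N ω ≠ Ztilde N ω} ≤
      2 / p ^ 2 * (1 - p ^ 2) ^ ((N : ℝ) / 4) := by
  have := isProbabilityMeasure_prodBern hp₀.le hp₁.le N
  refine (measureReal_mono (fun ω hω => ?_) (measure_ne_top _ _)).trans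
    (measureReal_exists_not_inSumset_le hp₀ hp₁ (J := N / 2) (f := fun j => N + N / 2 - j)
      fun j hj => by omega)
  by_contra h
  refine hω (Zcount_eq_Ztilde_of_forall fun n hn₁ hn₂ =>
    by_contra fun hmiss => h ⟨N + N / 2 - n, by omega, ?_⟩)
  rwa [show N + N / 2 - (N + N / 2 - n) = n by omega]

theorem indepFun_Ytilde_Ztilde (hp₀ : 0 ≤ p) (hp₁ : p ≤ 1) :
    IndepFun (Ytilde N) (Ztilde N) (prodBern p N) :=
  have := isProbabilityMeasure_bern_s6 hp₀ hp₁
  indepFun_pi_of_dependsOn _ (Finset.disjoint_filter.2 fun _ _ h => by omega)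
    dependsOn_Ytilde dependsOn_Ztilde

end Decoupling

theorem stmt6_general (p : ℝ) (hp0 : 0 < p) (hp1 : p < 1) (N m : ℕ) :
    |(prodBern p N {ω | Wcount N ω = m}).toReal -
        ∑ y ∈ Finset.range (m + 1),
          (prodBern p N {ω | Ycount N ω = y}).toReal *
            (prodBern p N {ω | Zcount N ω = m - y}).toReal| ≤
      8 / p ^ 2 * (1 - p ^ 2) ^ ((N : ℝ) / 4) := by
  have := isProbabilityMeasure_prodBern hp0.le hp1.le N
  have hW := abs_measureReal_add_eq_sub_le (μ := prodBern p N)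
    (Ycount N) (Ytilde N) (Zcount N) (Ztilde N) m
  rw [(indepFun_Ytilde_Ztilde hp0.le hp1.le).measureReal_add_eq .of_discrete .of_discrete] at hW
  have hconv := abs_probConv_sub_le (μ := prodBern p N)
    (X := Ycount N) (X' := Ytilde N) (Y := Zcount N) (Y' := Ztilde N)
    .of_discrete .of_discrete .of_discrete .of_discrete m
  have hY := measureReal_Ycount_ne_Ytilde_le hp0 hp1 (N := N)
  have hZ := measureReal_Zcount_ne_Ztilde_le hp0 hp1 (N := N)
  change |(prodBern p N).real _ - probConv (prodBern p N) (Ycount N) (Zcount N) m| ≤ _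
  simp only [Wcount_eq_Ycount_add_Zcount]
  have hbound : 8 / p ^ 2 * (1 - p ^ 2) ^ ((N : ℝ) / 4) =
      4 * (2 / p ^ 2 * (1 - p ^ 2) ^ ((N : ℝ) / 4)) := by ring
  rw [abs_le] at hW hconv ⊢
  constructor <;> linarith [hW.1, hW.2, hconv.1, hconv.2]

/-- The distribution of `W` is close to the convolution of those of `Y` and `Z`. -/
theorem stmt6 (p : ℝ) (hp0 : 0 < p) (hp1 : p < 1) (N m : ℕ) (hm : m ≤ 2 * N) :
    |(prodBern p N {ω | Wcount N ω = m}).toReal -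
        ∑ y ∈ Finset.range (m + 1),
          (prodBern p N {ω | Ycount N ω = y}).toReal *
            (prodBern p N {ω | Zcount N ω = m - y}).toReal| ≤
      8 / p ^ 2 * (1 - p ^ 2) ^ ((N : ℝ) / 4) :=
  stmt6_general p hp0 hp1 N m
end
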